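/- Let f ∈ G be a bump whose support is not all of ℚ. Then the support of f is bounded above or bounded below in ℚ but not both (i.e. f is cofinal) if and only if for every g ∈ G, support(g ∘ f ∘ g⁻¹) ∩ support(f) ≠ ∅. -/

import Mathlib

open FirstOrder

/-- `G` is the group of all order-automorphisms of `(ℚ, <)` under composition. -/
abbrev G : Type := ℚ ≃o ℚ

/-- The support of `f ∈ G`: the set of points moved by `f`. -/
def support (f : G) : Set ℚ := {a : ℚ | f a ≠ a}

/-- The orbital relation of `f`: `a ~_f b` iff `f^m a ≤ b ≤ f^n a` for some integers `m, n`. -/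
def orbRel (f : G) (a b : ℚ) : Prop := ∃ m n : ℤ, (f ^ m) a ≤ b ∧ b ≤ (f ^ n) a

/-- An orbital of `f` is an equivalence class of the orbital relation of `f`. -/
def IsOrbital (f : G) (X : Set ℚ) : Prop := ∃ a : ℚ, X = {b : ℚ | orbRel f a b}

/-- An orbital is nontrivial if it contains a point moved by `f`. -/
def IsNontrivialOrbital (f : G) (X : Set ℚ) : Prop :=
  IsOrbital f X ∧ ∃ a ∈ X, f a ≠ a

/-- A bump is a non-identity element of `G` with exactly one nontrivial orbital. -/
def IsBump (f : G) : Prop := f ≠ 1 ∧ ∃! X : Set ℚ, IsNontrivialOrbital f X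

/-- `g` is a restriction of `f`: the support of `g` is contained in that of `f`, and
`g` agrees with `f` on the support of `g`. -/
def IsRestriction (g f : G) : Prop :=
  support g ⊆ support f ∧ ∀ a ∈ support g, g a = f a

/-!
The support of a bump is order-convex, since it is a single orbital. If it is unbounded below it
is a lower set, as is its image under any `g`, and two nonempty lower sets of a linear order meet
(dually if it is unbounded above). If it is bounded on both sides, a large translation moves it
off itself; if it is unbounded on both sides, it is all of `ℚ`.
-/

section LinearOrder

variable {α : Type*} [LinearOrder α] {s : Set α}

theorem Set.OrdConnected.isLowerSet_of_not_bddBelow (hs : s.OrdConnected) (h : ¬BddBelow s) :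
    IsLowerSet s := by
  intro a b hba ha
  obtain ⟨x, hx, hxb⟩ := not_bddBelow_iff.1 h b
  exact hs.out hx ha ⟨hxb.le, hba⟩

theorem Set.OrdConnected.isUpperSet_of_not_bddAbove (hs : s.OrdConnected) (h : ¬BddAbove s) :
    IsUpperSet s := by
  intro a b hab ha
  obtain ⟨x, hx, hbx⟩ := not_bddAbove_iff.1 h b
  exact hs.out ha hx ⟨hab, hbx.le⟩

theorem Set.OrdConnected.eq_univ_of_not_bddAbove_of_not_bddBelow (hs : s.OrdConnected)
    (hA : ¬BddAbove s) (hB : ¬BddBelow s) : s = Set.univ := by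
  refine Set.eq_univ_of_forall fun b => ?_
  obtain ⟨x, hx, hxb⟩ := not_bddBelow_iff.1 hB b
  obtain ⟨y, hy, hby⟩ := not_bddAbove_iff.1 hA b
  exact hs.out hx hy ⟨hxb.le, hby.le⟩

theorem IsLowerSet.inter_nonempty {t : Set α} (hs : IsLowerSet s) (ht : IsLowerSet t)
    (hs' : s.Nonempty) (ht' : t.Nonempty) : (s ∩ t).Nonempty := by
  rcases hs.total ht with hst | hts
  · rwa [Set.inter_eq_left.2 hst]
  · rwa [Set.inter_eq_right.2 hts]

theorem IsUpperSet.inter_nonempty {t : Set α} (hs : IsUpperSet s) (ht : IsUpperSet t)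
    (hs' : s.Nonempty) (ht' : t.Nonempty) : (s ∩ t).Nonempty := by
  rcases hs.total ht with hst | hts
  · rwa [Set.inter_eq_left.2 hst]
  · rwa [Set.inter_eq_right.2 hts]

end LinearOrder

theorem exists_orderIso_disjoint_image {α : Type*} [AddCommGroup α] [LinearOrder α]
    [IsOrderedAddMonoid α] [NoMaxOrder α] {s : Set α} (hA : BddAbove s) (hB : BddBelow s) :
    ∃ g : α ≃o α, Disjoint (g '' s) s := by
  obtain ⟨u, hu⟩ := hA
  obtain ⟨l, hl⟩ := hB
  obtain ⟨t, ht⟩ := exists_gt (u - l)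
  refine ⟨OrderIso.addLeft t, Set.disjoint_left.2 ?_⟩
  rintro _ ⟨y, hy, rfl⟩ hty
  have hu' : u < t + l := sub_lt_iff_lt_add.1 ht
  exact (hu'.trans_le ((add_le_add_iff_left t).2 (hl hy))).not_ge (hu hty)

theorem support_conj (f g : G) : support (g * f * g⁻¹) = g '' support f := by
  ext x
  rw [OrderIso.image_eq_preimage_symm]
  exact not_congr g.eq_symm_apply.symm

theorem orbRel_refl (f : G) (a : ℚ) : orbRel f a a :=
  ⟨0, 0, le_rfl, le_rfl⟩

theorem mem_support_of_orbRel {f : G} {a c : ℚ} (ha : a ∈ support f) (hac : orbRel f a c) :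
    c ∈ support f := by
  obtain ⟨m, n, hm, hn⟩ := hac
  intro hc
  have fix (k : ℤ) : (f ^ k) c = c := MulAction.mem_fixedBy_zpow (α := ℚ) (g := f) hc k
  have hle : a ≤ c := (f ^ m).le_iff_le.1 (by rwa [fix m])
  have hge : c ≤ a := (f ^ n).le_iff_le.1 (by rwa [fix n])
  exact ha (le_antisymm hle hge ▸ hc)

namespace IsBump

variable {f : G}

theorem support_nonempty (hf : IsBump f) : (support f).Nonempty := by
  by_contra h
  exact hf.1 (OrderIso.ext (funext fun x => not_not.1 fun hx => h ⟨x, hx⟩))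

theorem orbRel_of_mem_support (hf : IsBump f) {a b : ℚ} (ha : a ∈ support f)
    (hb : b ∈ support f) : orbRel f a b := by
  have nontrivial {x : ℚ} (hx : x ∈ support f) :
      IsNontrivialOrbital f {y | orbRel f x y} :=
    ⟨⟨x, rfl⟩, x, orbRel_refl f x, hx⟩
  have : {y | orbRel f b y} = {y | orbRel f a y} :=
    hf.2.unique (nontrivial hb) (nontrivial ha)
  exact this.subset (orbRel_refl f b)

theorem ordConnected_support (hf : IsBump f) : (support f).OrdConnected := by
  refine ⟨fun a ha b hb c ⟨hac, hcb⟩ => mem_support_of_orbRel ha ?_⟩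
  obtain ⟨-, n, -, hn⟩ := hf.orbRel_of_mem_support ha hb
  exact ⟨0, n, hac, hcb.trans hn⟩

end IsBump

/-- A non-coterminal bump `f` is cofinal (support bounded above or below but not both) iff the
support of every conjugate of `f` meets the support of `f`. -/
theorem cofinal_iff (f : G) (hb : IsBump f) (hne : support f ≠ Set.univ) :
    ((BddAbove (support f) ∧ ¬ BddBelow (support f)) ∨
     (BddBelow (support f) ∧ ¬ BddAbove (support f))) ↔
      ∀ g : G, (support (g * f * g⁻¹) ∩ support f).Nonempty := by
  have hconn := hb.ordConnected_support
  have hS := hb.support_nonempty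
  simp_rw [support_conj]
  constructor
  · rintro (⟨-, hB⟩ | ⟨-, hA⟩) g
    · have hL := hconn.isLowerSet_of_not_bddBelow hB
      exact (hL.image g).inter_nonempty hL (hS.image g) hS
    · have hU := hconn.isUpperSet_of_not_bddAbove hA
      exact (hU.image g).inter_nonempty hU (hS.image g) hS
  · intro hmeet
    by_cases hA : BddAbove (support f) <;> by_cases hB : BddBelow (support f)
    · obtain ⟨g, hg⟩ := exists_orderIso_disjoint_image hA hB
      exact absurd hg (hmeet g).not_disjoint
    · exact Or.inl ⟨hA, hB⟩
    · exact Or.inr ⟨hB, hA⟩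
    · exact absurd (hconn.eq_univ_of_not_bddAbove_of_not_bddBelow hA hB) hne
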